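/- Let T₁, …, Tₙ be bounded linear operators on a complex Hilbert space H. Then ‖∑_{k=1}^n T_k‖² ≤ ‖A‖ · ‖B‖, where A is the real n×n matrix with entries A_{jk} = ‖ |T_j|^{1/2} |T_k|^{1/2} ‖ and B is the real n×n matrix with entries B_{jk} = ‖ |T_j*|^{1/2} |T_k*|^{1/2} ‖, with |T| = (T*T)^{1/2}, |T|^{1/2} the positive fourth root of T*T, and ‖A‖, ‖B‖ the operator norms of the matrices on Euclidean n-space. -/

import Mathlib

set_option synthInstance.maxHeartbeats 1000000

open ContinuousLinearMap

/-!
Put `P_k = |T_k|^{1/2}` and `Q_k = |T_k*|^{1/2}`. The mixed Schwarz inequality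
`|⟪T x, y⟫| ≤ ‖|T|^{1/2} x‖ ‖|T*|^{1/2} y‖` and Cauchy–Schwarz in `k` give
`|⟪(∑ T_k) x, y⟫| ≤ (∑ ‖P_k x‖²)^{1/2} (∑ ‖Q_k y‖²)^{1/2}`, and the `TT*` argument of Cotlar–Stein
bounds `∑ ‖P_k x‖²` by `‖A‖ ‖x‖²`: applied to `w = ∑ P_k* P_k x` it gives
`(∑ ‖P_k x‖²)² ≤ ‖w‖² ‖x‖²` and `‖w‖² ≤ ∑ ‖P_j P_k*‖ ‖P_j x‖ ‖P_k x‖ ≤ ‖A‖ ∑ ‖P_k x‖²`.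

The mixed Schwarz inequality is proved by regularisation instead of polar decomposition: for
`δ > 0` the operators `P_δ = (T*T + δ)^{1/4}` and `Q_δ = (TT* + δ)^{1/4}` are invertible, and
`R = Q_δ⁻¹ T P_δ⁻¹` is a contraction, since the intertwining relation `T f(T*T) = f(TT*) T` turns
`R*R` into `T*T (T*T + δ)⁻¹`. Hence `|⟪T x, y⟫| ≤ ‖P_δ x‖ ‖Q_δ y‖`, where
`‖P_δ x‖² ≤ ‖|T|^{1/2} x‖² + √δ ‖x‖²`; let `δ → 0`.
-/

open Polynomial Filter Topology

theorem SemiconjBy.aeval {R B : Type*} [CommSemiring R] [Semiring B] [Algebra R B] {a x y : B}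
    (h : SemiconjBy a x y) (p : R[X]) : SemiconjBy a (aeval x p) (aeval y p) := by
  induction p using Polynomial.induction_on' with
  | add p q hp hq => simpa only [map_add] using hp.add_right hq
  | monomial n c =>
    simpa only [aeval_monomial] using
      SemiconjBy.mul_right (Algebra.commute_algebraMap_right c a) (h.pow_right n)

theorem exists_polynomial_tendstoUniformlyOn_Icc {f : ℝ → ℝ} (hf : Continuous f) (M : ℝ) :
    ∃ p : ℕ → ℝ[X], TendstoUniformlyOn (fun m t => (p m).eval t) f atTop (Set.Icc (-M) M) := by
  choose p hp using fun m : ℕ =>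
    exists_polynomial_near_of_continuousOn (-M) M f hf.continuousOn (1 / (m + 1))
      Nat.one_div_pos_of_nat
  refine ⟨p, Metric.tendstoUniformlyOn_iff.2 fun ε hε => ?_⟩
  obtain ⟨N, hN⟩ := exists_nat_one_div_lt hε
  filter_upwards [eventually_ge_atTop N] with m hm t ht
  rw [dist_comm, Real.dist_eq]
  calc |(p m).eval t - f t| < 1 / (m + 1) := hp m t ht
    _ ≤ 1 / (N + 1) := by gcongr
    _ < ε := hN

section CStarAlgebra

variable {A : Type*} [CStarAlgebra A]

theorem SemiconjBy.cfc_real {a x y : A} (h : SemiconjBy a x y) (hx : IsSelfAdjoint x)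
    (hy : IsSelfAdjoint y) {f : ℝ → ℝ} (hf : Continuous f) :
    SemiconjBy a (cfc f x) (cfc f y) := by
  -- the factor `‖1‖` is there because `A` may be the zero algebra
  set M := max ‖x‖ ‖y‖ * ‖(1 : A)‖
  obtain ⟨p, hp⟩ := exists_polynomial_tendstoUniformlyOn_Icc hf M
  have hlim : ∀ b : A, IsSelfAdjoint b → ‖b‖ ≤ max ‖x‖ ‖y‖ →
      Tendsto (fun m => Polynomial.aeval b (p m)) atTop (𝓝 (cfc f b)) := by
    intro b hb hbM
    simp only [← cfc_polynomial _ b hb]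
    refine tendsto_cfc_fun (hp.mono fun t ht => ?_) (.of_forall fun m => by fun_prop)
    have := spectrum.subset_closedBall_norm_mul b ht
    rw [mem_closedBall_zero_iff, Real.norm_eq_abs] at this
    exact abs_le.1 (this.trans (mul_le_mul_of_nonneg_right hbM (norm_nonneg _)))
  exact tendsto_nhds_unique
    (((hlim x hx (le_max_left _ _)).const_mul a).congr fun m => (h.aeval (p m)).eq)
    ((hlim y hy (le_max_right _ _)).mul_const a)

theorem cfc_mul_cfc_inv_eq_one {x : A} (hx : IsSelfAdjoint x) {p : ℝ → ℝ} (hpc : Continuous p)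
    (hp : ∀ t, p t ≠ 0) : cfc p x * cfc (fun t => (p t)⁻¹) x = 1 := by
  rw [← cfc_mul p _ x, ← cfc_one ℝ x]
  exact cfc_congr fun t _ => mul_inv_cancel₀ (hp t)

theorem cfc_inv_mul_cfc_eq_one {x : A} (hx : IsSelfAdjoint x) {p : ℝ → ℝ} (hpc : Continuous p)
    (hp : ∀ t, p t ≠ 0) : cfc (fun t => (p t)⁻¹) x * cfc p x = 1 := by
  rw [← cfc_mul _ p x, ← cfc_one ℝ x]
  exact cfc_congr fun t _ => inv_mul_cancel₀ (hp t)

theorem star_mul_self_cfc_mul_mul_cfc (a : A) {q : ℝ → ℝ} (hq : Continuous q) :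
    star (cfc q (a * star a) * a * cfc q (star a * a)) *
        (cfc q (a * star a) * a * cfc q (star a * a)) =
      cfc (fun t => t * q t ^ 4) (star a * a) := by
  set x := star a * a
  set y := a * star a
  have hx : IsSelfAdjoint x := .star_mul_self a
  have hy : IsSelfAdjoint y := .mul_star_self a
  have hsemi : SemiconjBy (star a) y x := by simp only [SemiconjBy, x, y, mul_assoc]
  calc star (cfc q y * a * cfc q x) * (cfc q y * a * cfc q x)
      = cfc q x * (star a * cfc (fun t => q t * q t) y) * a * cfc q x := by
        simp only [star_mul, (cfc_predicate q x).star_eq, (cfc_predicate q y).star_eq,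
          cfc_mul q q y, mul_assoc]
    _ = cfc q x * cfc (fun t => q t * q t) x * cfc (fun t => t) x * cfc q x := by
        rw [(hsemi.cfc_real hy hx (f := fun t => q t * q t) (hq.mul hq)).eq, cfc_id' ℝ x]
        simp only [x, mul_assoc]
    _ = cfc (fun t => t * q t ^ 4) x := by
        rw [← cfc_mul q (fun t => q t * q t) x,
          ← cfc_mul (fun t => q t * (q t * q t)) (fun t => t) x,
          ← cfc_mul (fun t => q t * (q t * q t) * t) q x]
        exact cfc_congr fun t _ => by ring

theorem exists_norm_le_one_eq_cfc_mul_mul_cfc (a : A) {δ : ℝ} (hδ : 0 < δ) :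
    ∃ r : A, ‖r‖ ≤ 1 ∧ a = cfc (fun t => √√(|t| + δ)) (a * star a) * r *
      cfc (fun t => √√(|t| + δ)) (star a * a) := by
  -- `|t|` makes `p` positive on all of `ℝ`, so its reciprocal inverts `cfc p` without spectral data
  set p : ℝ → ℝ := fun t => √√(|t| + δ)
  have hp : ∀ t, p t ≠ 0 := fun t => by positivity
  have hpc : Continuous p := by fun_prop
  set q : ℝ → ℝ := fun t => (p t)⁻¹
  refine ⟨cfc q (a * star a) * a * cfc q (star a * a), ?_, ?_⟩
  · have hq4 (t : ℝ) : t * q t ^ 4 = t / (|t| + δ) := by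
      simp only [q, p, inv_pow, ← div_eq_mul_inv]
      rw [show (4 : ℕ) = 2 * 2 from rfl, pow_mul, Real.sq_sqrt (by positivity),
        Real.sq_sqrt (by positivity)]
    have hnorm : ‖cfc q (a * star a) * a * cfc q (star a * a)‖ ^ 2 ≤ 1 := by
      rw [sq, ← CStarRing.norm_star_mul_self,
        star_mul_self_cfc_mul_mul_cfc a (q := q) (hpc.inv₀ hp)]
      refine norm_cfc_le zero_le_one fun t _ => ?_
      rw [hq4, Real.norm_eq_abs, abs_div, abs_of_pos (by positivity : 0 < |t| + δ)]
      exact div_le_one_of_le₀ (by linarith [le_abs_self t]) (by positivity)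
    exact pow_le_one_iff_of_nonneg (norm_nonneg _) two_ne_zero |>.1 hnorm
  · calc a = (cfc p (a * star a) * cfc q (a * star a)) * a *
          (cfc q (star a * a) * cfc p (star a * a)) := by
          rw [cfc_mul_cfc_inv_eq_one (.mul_star_self a) hpc hp,
            cfc_inv_mul_cfc_eq_one (.star_mul_self a) hpc hp, one_mul, mul_one]
      _ = _ := by simp only [mul_assoc]

theorem CFC.sqrt_sqrt_eq_cfc [PartialOrder A] [StarOrderedRing A] {b : A} (hb : 0 ≤ b) :
    CFC.sqrt (CFC.sqrt b) = cfc (fun t => √√t) b := by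
  rw [CFC.sqrt_eq_real_sqrt _ (CFC.sqrt_nonneg b), CFC.sqrt_eq_real_sqrt b hb,
    cfcₙ_eq_cfc (hf0 := Real.sqrt_zero), cfcₙ_eq_cfc (hf0 := Real.sqrt_zero), ← cfc_comp' _ _ b]

end CStarAlgebra

section InnerProductSpace

variable {𝕜 E F G G' ι : Type*} [RCLike 𝕜] [Fintype ι] [DecidableEq ι]
  [NormedAddCommGroup E] [InnerProductSpace 𝕜 E] [CompleteSpace E]
  [NormedAddCommGroup F] [InnerProductSpace 𝕜 F] [CompleteSpace F]
  [NormedAddCommGroup G] [InnerProductSpace 𝕜 G] [CompleteSpace G]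
  [NormedAddCommGroup G'] [InnerProductSpace 𝕜 G'] [CompleteSpace G']

open RCLike Matrix

theorem ContinuousLinearMap.norm_apply_sq_le_norm_apply_sq_add (S T : E →L[𝕜] F) (x : E) :
    ‖S x‖ ^ 2 ≤ ‖T x‖ ^ 2 + ‖adjoint S ∘L S - adjoint T ∘L T‖ * ‖x‖ ^ 2 := by
  have h : ‖S x‖ ^ 2 - ‖T x‖ ^ 2 = re (inner 𝕜 ((adjoint S ∘L S - adjoint T ∘L T) x) x) := by
    rw [apply_norm_sq_eq_inner_adjoint_left, apply_norm_sq_eq_inner_adjoint_left, _root_.sub_apply,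
      inner_sub_left, map_sub]
  have := (re_le_norm _).trans (norm_inner_le_norm (𝕜 := 𝕜) ((adjoint S ∘L S - adjoint T ∘L T) x) x)
  nlinarith [le_opNorm (adjoint S ∘L S - adjoint T ∘L T) x, norm_nonneg x]

theorem Matrix.dotProduct_mulVec_le_norm_toEuclideanCLM (A : Matrix ι ι ℝ) (c : ι → ℝ) :
    c ⬝ᵥ A *ᵥ c ≤ ‖toEuclideanCLM (𝕜 := ℝ) A‖ * ∑ i, c i ^ 2 := by
  have hc : ∑ i, c i ^ 2 = ‖WithLp.toLp 2 c‖ ^ 2 := by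
    simp [EuclideanSpace.norm_sq_eq]
  rw [← inner_toEuclideanCLM, hc, sq, ← mul_assoc]
  exact (real_inner_le_norm _ _).trans (by rw [mul_comm]; gcongr; exact le_opNorm _ _)

theorem sum_norm_apply_sq_le (S : ι → E →L[𝕜] F) (A : Matrix ι ι ℝ)
    (hA : ∀ j k, ‖S j ∘L adjoint (S k)‖ ≤ A j k) (x : E) :
    ∑ k, ‖S k x‖ ^ 2 ≤ ‖toEuclideanCLM (𝕜 := ℝ) A‖ * ‖x‖ ^ 2 := by
  set c : ι → ℝ := fun k => ‖S k x‖
  set w : E := ∑ k, adjoint (S k) (S k x)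
  have hsum : ∑ k, c k ^ 2 = re (inner 𝕜 w x) := by
    simp only [w, c, sum_inner, map_sum, apply_norm_sq_eq_inner_adjoint_left,
      ContinuousLinearMap.comp_apply]
  have hw : ‖w‖ ^ 2 ≤ ‖toEuclideanCLM (𝕜 := ℝ) A‖ * ∑ k, c k ^ 2 := by
    refine le_trans ?_ (dotProduct_mulVec_le_norm_toEuclideanCLM A c)
    rw [← inner_self_eq_norm_sq (𝕜 := 𝕜)]
    simp only [dotProduct, mulVec, Finset.mul_sum, w, sum_inner, inner_sum, map_sum]
    refine Finset.sum_le_sum fun j _ => Finset.sum_le_sum fun k _ => ?_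
    rw [adjoint_inner_right]
    calc re (inner 𝕜 (S j (adjoint (S k) (S k x))) (S j x))
        ≤ ‖(S j ∘L adjoint (S k)) (S k x)‖ * ‖S j x‖ :=
          (re_le_norm _).trans (norm_inner_le_norm _ _)
      _ ≤ A j k * c k * c j := by
          gcongr
          exact (le_opNorm _ _).trans (by gcongr; exact hA j k)
      _ = c j * (A j k * c k) := by ring
  have hQ : ∑ k, c k ^ 2 ≤ ‖w‖ * ‖x‖ := hsum ▸ (re_le_norm _).trans (norm_inner_le_norm _ _)
  have hQ0 : 0 ≤ ∑ k, c k ^ 2 := by positivity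
  rcases hQ0.eq_or_lt with h0 | h0
  · rw [← h0]; positivity
  · nlinarith [pow_le_pow_left₀ hQ0 hQ 2, norm_nonneg w, norm_nonneg x]

theorem norm_sum_sq_le_of_norm_inner_le (T : ι → E →L[𝕜] F) (P : ι → E →L[𝕜] G)
    (Q : ι → F →L[𝕜] G') (A B : Matrix ι ι ℝ) (hA : ∀ j k, ‖P j ∘L adjoint (P k)‖ ≤ A j k)
    (hB : ∀ j k, ‖Q j ∘L adjoint (Q k)‖ ≤ B j k)
    (hT : ∀ k x y, ‖inner 𝕜 (T k x) y‖ ≤ ‖P k x‖ * ‖Q k y‖) :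
    ‖∑ k, T k‖ ^ 2 ≤ ‖toEuclideanCLM (𝕜 := ℝ) A‖ * ‖toEuclideanCLM (𝕜 := ℝ) B‖ := by
  suffices h : ‖∑ k, T k‖ ≤ √‖toEuclideanCLM (𝕜 := ℝ) A‖ * √‖toEuclideanCLM (𝕜 := ℝ) B‖ by
    calc ‖∑ k, T k‖ ^ 2 ≤ (√‖toEuclideanCLM (𝕜 := ℝ) A‖ * √‖toEuclideanCLM (𝕜 := ℝ) B‖) ^ 2 := by
          gcongr
      _ = _ := by rw [mul_pow, Real.sq_sqrt (norm_nonneg _), Real.sq_sqrt (norm_nonneg _)]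
  refine opNorm_le_of_re_inner_le (by positivity) fun x y hx hy => ?_
  calc re (inner 𝕜 ((∑ k, T k) x) y) ≤ ∑ k, ‖P k x‖ * ‖Q k y‖ := by
        rw [_root_.sum_apply, sum_inner, map_sum]
        exact Finset.sum_le_sum fun k _ => (re_le_norm _).trans (hT k x y)
    _ ≤ √(∑ k, ‖P k x‖ ^ 2) * √(∑ k, ‖Q k y‖ ^ 2) := Real.sum_mul_le_sqrt_mul_sqrt _ _ _
    _ ≤ _ := by
        gcongr
        · simpa [hx] using sum_norm_apply_sq_le P A hA x
        · simpa [hy] using sum_norm_apply_sq_le Q B hB y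

end InnerProductSpace

section HilbertSpace

variable {H : Type*} [NormedAddCommGroup H] [InnerProductSpace ℂ H] [CompleteSpace H]

theorem norm_cfc_sqrt_sqrt_add_apply_sq_le {b : H →L[ℂ] H} (hb : 0 ≤ b) {δ : ℝ} (hδ : 0 ≤ δ)
    (x : H) :
    ‖cfc (fun t => √√(|t| + δ)) b x‖ ^ 2 ≤ ‖cfc (fun t => √√t) b x‖ ^ 2 + √δ * ‖x‖ ^ 2 := by
  refine (norm_apply_sq_le_norm_apply_sq_add _ (cfc (fun t => √√t) b) x).trans ?_
  gcongr
  rw [(cfc_predicate (fun t => √√(|t| + δ)) b).adjoint_eq,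
    (cfc_predicate (fun t => √√t) b).adjoint_eq, ← mul_def, ← mul_def, ← cfc_mul .., ← cfc_mul ..,
    ← cfc_sub ..]
  refine norm_cfc_le (Real.sqrt_nonneg δ) fun t ht => ?_
  have ht : 0 ≤ t := spectrum_nonneg_of_nonneg hb ht
  have hsub : √(t + δ) ≤ √t + √δ := Real.sqrt_le_iff.2 ⟨by positivity, by
    nlinarith [Real.sq_sqrt ht, Real.sq_sqrt hδ, Real.sqrt_nonneg t, Real.sqrt_nonneg δ]⟩
  have hmono : √t ≤ √(t + δ) := Real.sqrt_le_sqrt (by linarith)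
  simp only [abs_of_nonneg ht, Real.mul_self_sqrt (Real.sqrt_nonneg _), Real.norm_eq_abs]
  rw [abs_of_nonneg (by linarith)]
  linarith

theorem norm_inner_apply_le_sqrt_sqrt (a : H →L[ℂ] H) (x y : H) :
    ‖inner ℂ (a x) y‖ ≤
      ‖CFC.sqrt (CFC.sqrt (adjoint a * a)) x‖ * ‖CFC.sqrt (CFC.sqrt (a * adjoint a)) y‖ := by
  have hx : 0 ≤ adjoint a * a := by simpa only [star_eq_adjoint] using star_mul_self_nonneg a
  have hy : 0 ≤ a * adjoint a := by simpa only [star_eq_adjoint] using mul_star_self_nonneg a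
  rw [CFC.sqrt_sqrt_eq_cfc hx, CFC.sqrt_sqrt_eq_cfc hy]
  set α := ‖cfc (fun t => √√t) (adjoint a * a) x‖
  set β := ‖cfc (fun t => √√t) (a * adjoint a) y‖
  have hreg : ∀ δ > 0, ‖inner ℂ (a x) y‖ ^ 2 ≤ (α ^ 2 + √δ * ‖x‖ ^ 2) * (β ^ 2 + √δ * ‖y‖ ^ 2) := by
    intro δ hδ
    obtain ⟨r, hr, hfac⟩ := exists_norm_le_one_eq_cfc_mul_mul_cfc a hδ
    simp only [star_eq_adjoint] at hfac
    set P := cfc (fun t => √√(|t| + δ)) (adjoint a * a)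
    set Q := cfc (fun t => √√(|t| + δ)) (a * adjoint a)
    have hinner : inner ℂ (a x) y = inner ℂ (r (P x)) (Q y) := by
      rw [hfac, mul_apply_eq_comp, mul_apply_eq_comp, ← adjoint_inner_right,
        (cfc_predicate (fun t => √√(|t| + δ)) (a * adjoint a)).adjoint_eq]
    have hle : ‖inner ℂ (a x) y‖ ≤ ‖P x‖ * ‖Q y‖ := by
      rw [hinner]
      refine (norm_inner_le_norm _ _).trans ?_
      gcongr
      exact r.le_of_opNorm_le hr _ |>.trans_eq (one_mul _)
    calc ‖inner ℂ (a x) y‖ ^ 2 ≤ ‖P x‖ ^ 2 * ‖Q y‖ ^ 2 := by rw [← mul_pow]; gcongr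
      _ ≤ _ := by
        gcongr
        · exact norm_cfc_sqrt_sqrt_add_apply_sq_le hx hδ.le x
        · exact norm_cfc_sqrt_sqrt_add_apply_sq_le hy hδ.le y
  have hlim : Tendsto (fun δ : ℝ => (α ^ 2 + √δ * ‖x‖ ^ 2) * (β ^ 2 + √δ * ‖y‖ ^ 2)) (𝓝[>] 0)
      (𝓝 ((α * β) ^ 2)) := by
    have hc : Continuous fun δ : ℝ => (α ^ 2 + √δ * ‖x‖ ^ 2) * (β ^ 2 + √δ * ‖y‖ ^ 2) := by
      fun_prop
    simpa [mul_pow] using (hc.tendsto 0).mono_left nhdsWithin_le_nhds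
  have hsq := ge_of_tendsto hlim (eventually_nhdsWithin_of_forall hreg)
  exact (pow_le_pow_iff_left₀ (norm_nonneg _) (by positivity) two_ne_zero).1 hsq

end HilbertSpace

theorem improved_cotlar_stein_fourth_roots {H : Type*} [NormedAddCommGroup H]
    [InnerProductSpace ℂ H] [CompleteSpace H] {n : ℕ} (T : Fin n → (H →L[ℂ] H))
    (A B : Matrix (Fin n) (Fin n) ℝ)
    (hA : ∀ j k, A j k =
      ‖CFC.sqrt (CFC.sqrt (adjoint (T j) * T j)) * CFC.sqrt (CFC.sqrt (adjoint (T k) * T k))‖)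
    (hB : ∀ j k, B j k =
      ‖CFC.sqrt (CFC.sqrt (T j * adjoint (T j))) * CFC.sqrt (CFC.sqrt (T k * adjoint (T k)))‖) :
    ‖∑ k, T k‖ ^ 2 ≤
      ‖Matrix.toEuclideanCLM (𝕜 := ℝ) A‖ * ‖Matrix.toEuclideanCLM (𝕜 := ℝ) B‖ := by
  have hsa (S : H →L[ℂ] H) : IsSelfAdjoint (CFC.sqrt S) := (CFC.sqrt_nonneg S).isSelfAdjoint
  refine norm_sum_sq_le_of_norm_inner_le T _ _ A B (fun j k => ?_) (fun j k => ?_)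
    fun k => norm_inner_apply_le_sqrt_sqrt (T k)
  · rw [(hsa _).adjoint_eq]
    exact (hA j k).ge
  · rw [(hsa _).adjoint_eq]
    exact (hB j k).ge
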